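/- Let λ₁, λ₂ : ℝ² → ℝ be C² functions with λ₁ ≠ λ₂ on an open set. With the coefficients C₁⁽ˣ⁾ = −(∂λ₂/∂r₂)/(λ₁−λ₂), C₂⁽ˣ⁾ = (∂λ₁/∂r₁)/(λ₁−λ₂) and C₁⁽ᵠ⁾ = (∂λ₁/∂r₂)/(λ₁−λ₂), C₂⁽ᵠ⁾ = −(∂λ₂/∂r₁)/(λ₁−λ₂), the Laplace invariants satisfy k⁽ˣ⁾ := ∂C₂⁽ˣ⁾/∂r₂ + C₁⁽ˣ⁾C₂⁽ˣ⁾ = (1/(λ₁−λ₂)) ∂²λ₁/∂r₁∂r₂ − (1/(λ₁−λ₂)²) (∂λ₁/∂r₁)(∂λ₁/∂r₂), and this quantity equals h⁽ᵠ⁾ := ∂C₁⁽ᵠ⁾/∂r₁ + C₁⁽ᵠ⁾C₂⁽ᵠ⁾. -/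

import Mathlib

/-! Both invariants are derivatives of quotients by `λ₁ − λ₂`. Expanding them with the quotient
rule, the `∂λ₂` contributions of the derivative of the denominator cancel against the product
terms `C₁C₂`, leaving the same expression in `λ₁` alone, once the mixed partials
`∂²λ₁/∂r₂∂r₁` and `∂²λ₁/∂r₁∂r₂` are identified by Schwarz's theorem. -/

open ContinuousLinearMap

section QuotientRule

variable {𝕜 E : Type*} [NontriviallyNormedField 𝕜] [NormedAddCommGroup E] [NormedSpace 𝕜 E]

theorem fderiv_fun_div_apply {c d : E → 𝕜} {p : E} (hc : DifferentiableAt 𝕜 c p)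
    (hd : DifferentiableAt 𝕜 d p) (hp : d p ≠ 0) (v : E) :
    fderiv 𝕜 (fun q => c q / d q) p v
      = (fderiv 𝕜 c p v * d p - c p * fderiv 𝕜 d p v) / d p ^ 2 := by
  have hinv : HasFDerivAt (fun q => (d q)⁻¹) ((-(d p ^ 2)⁻¹) • fderiv 𝕜 d p) p :=
    (hasDerivAt_inv hp).comp_hasFDerivAt p hd.hasFDerivAt
  rw [show (fun q => c q / d q) = fun q => c q * (d q)⁻¹ from funext fun _ => div_eq_mul_inv _ _,
    (hc.hasFDerivAt.fun_mul hinv).fderiv]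
  simp only [add_apply, smul_apply, smul_eq_mul]
  field_simp
  ring

end QuotientRule

section MixedPartials

variable {𝕜 E F : Type*} [NontriviallyNormedField 𝕜] [NormedAddCommGroup E] [NormedSpace 𝕜 E]
  [NormedAddCommGroup F] [NormedSpace 𝕜 F]

theorem fderiv_fderiv_apply_const {f : E → F} {p : E}
    (hf : DifferentiableAt 𝕜 (fderiv 𝕜 f) p) (v w : E) :
    fderiv 𝕜 (fun q => fderiv 𝕜 f q v) p w = fderiv 𝕜 (fderiv 𝕜 f) p w v := by
  rw [fderiv_clm_apply hf (differentiableAt_const v)]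
  simp

theorem ContDiffAt.fderiv_fderiv_apply_comm {n : WithTop ℕ∞} {f : E → F} {p : E}
    (hf : ContDiffAt 𝕜 n f p) (hn : minSmoothness 𝕜 2 ≤ n) (v w : E) :
    fderiv 𝕜 (fun q => fderiv 𝕜 f q v) p w = fderiv 𝕜 (fun q => fderiv 𝕜 f q w) p v := by
  have hf' : DifferentiableAt 𝕜 (fderiv 𝕜 f) p :=
    (hf.fderiv_right (m := 1) ((le_minSmoothness.trans' (by norm_num)).trans hn)).differentiableAt
      one_ne_zero
  rw [fderiv_fderiv_apply_const hf', fderiv_fderiv_apply_const hf', hf.isSymmSndFDerivAt hn]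

end MixedPartials

/-- For C² eigenvalues `λ₁ ≠ λ₂` on an open set, the Laplace invariant
`k⁽ˣ⁾ = ∂C₂⁽ˣ⁾/∂r₂ + C₁⁽ˣ⁾C₂⁽ˣ⁾` of the equation for `x` equals
`(1/(λ₁−λ₂)) ∂²λ₁/∂r₁∂r₂ − (1/(λ₁−λ₂)²)(∂λ₁/∂r₁)(∂λ₁/∂r₂)`, and this equals
the Laplace invariant `h⁽ᵠ⁾ = ∂C₁⁽ᵠ⁾/∂r₁ + C₁⁽ᵠ⁾C₂⁽ᵠ⁾` of the equation for `φ`. -/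
theorem laplace_invariant_k_x_eq_h_phi
    (lam₁ lam₂ : ℝ × ℝ → ℝ) (s : Set (ℝ × ℝ)) (hs : IsOpen s)
    (hlam₁ : ContDiffOn ℝ 2 lam₁ s) (hlam₂ : ContDiffOn ℝ 2 lam₂ s)
    (hne : ∀ p ∈ s, lam₁ p ≠ lam₂ p) :
    ∀ p ∈ s,
      -- k⁽ˣ⁾ := ∂C₂⁽ˣ⁾/∂r₂ + C₁⁽ˣ⁾C₂⁽ˣ⁾
      (fderiv ℝ (fun q => fderiv ℝ lam₁ q (1, 0) / (lam₁ q - lam₂ q)) p (0, 1)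
          + (-(fderiv ℝ lam₂ p (0, 1)) / (lam₁ p - lam₂ p))
            * (fderiv ℝ lam₁ p (1, 0) / (lam₁ p - lam₂ p))
        = (1 / (lam₁ p - lam₂ p))
            * fderiv ℝ (fun q => fderiv ℝ lam₁ q (0, 1)) p (1, 0)
          - (1 / (lam₁ p - lam₂ p)) ^ 2
            * (fderiv ℝ lam₁ p (1, 0) * fderiv ℝ lam₁ p (0, 1)))
      ∧
      -- k⁽ˣ⁾ = h⁽ᵠ⁾ := ∂C₁⁽ᵠ⁾/∂r₁ + C₁⁽ᵠ⁾C₂⁽ᵠ⁾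
      (fderiv ℝ (fun q => fderiv ℝ lam₁ q (1, 0) / (lam₁ q - lam₂ q)) p (0, 1)
          + (-(fderiv ℝ lam₂ p (0, 1)) / (lam₁ p - lam₂ p))
            * (fderiv ℝ lam₁ p (1, 0) / (lam₁ p - lam₂ p))
        = fderiv ℝ (fun q => fderiv ℝ lam₁ q (0, 1) / (lam₁ q - lam₂ q)) p (1, 0)
          + (fderiv ℝ lam₁ p (0, 1) / (lam₁ p - lam₂ p))
            * (-(fderiv ℝ lam₂ p (1, 0)) / (lam₁ p - lam₂ p))) := by
  intro p hp
  have h₁ : ContDiffAt ℝ 2 lam₁ p := hlam₁.contDiffAt (hs.mem_nhds hp)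
  have hd₁ : DifferentiableAt ℝ lam₁ p := h₁.differentiableAt two_ne_zero
  have hd₂ : DifferentiableAt ℝ lam₂ p :=
    (hlam₂.contDiffAt (hs.mem_nhds hp)).differentiableAt two_ne_zero
  have hD : lam₁ p - lam₂ p ≠ 0 := sub_ne_zero.mpr (hne p hp)
  have hpartial : ∀ v, DifferentiableAt ℝ (fun q => fderiv ℝ lam₁ q v) p := fun v =>
    ((h₁.fderiv_right (m := 1) (by norm_num)).differentiableAt one_ne_zero).clm_apply
      (differentiableAt_const v)
  have hquot : ∀ v w, fderiv ℝ (fun q => fderiv ℝ lam₁ q v / (lam₁ q - lam₂ q)) p w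
      = (fderiv ℝ (fun q => fderiv ℝ lam₁ q v) p w * (lam₁ p - lam₂ p)
          - fderiv ℝ lam₁ p v * (fderiv ℝ lam₁ p w - fderiv ℝ lam₂ p w))
        / (lam₁ p - lam₂ p) ^ 2 := fun v w => by
    rw [fderiv_fun_div_apply (hpartial v) (hd₁.fun_sub hd₂) hD, fderiv_fun_sub hd₁ hd₂, sub_apply]
  have hmixed := h₁.fderiv_fderiv_apply_comm (by simp [minSmoothness_of_isRCLikeNormedField])
    ((1, 0) : ℝ × ℝ) (0, 1)
  rw [hquot, hquot, hmixed]
  constructor <;> field_simp <;> ring
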